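/- arXiv:1202.1668 — 5 statements merged into one kernel-verified Lean document; each statement's English description precedes it below -/
import Mathlib

section
/- If nonnull soft open sets (F, E) and (G, E) form a soft separation of X̃ and (Y, τ_Y, E) is a soft connected soft subspace of (X, τ, E), then Ỹ lies entirely within (F, E) or entirely within (G, E). -/
/-- A soft topology over `X` with parameter set `E`: a family of soft sets
(functions `E → Set X`) containing the null and absolute soft sets, closed
under finite pointwise intersections and arbitrary pointwise unions. -/
structure SoftTopology (X E : Type*) where
  opens : Set (E → Set X)
  empty_mem : (fun _ => (∅ : Set X)) ∈ opens
  univ_mem : (fun _ => (Set.univ : Set X)) ∈ opens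
  inter_mem : ∀ F G, F ∈ opens → G ∈ opens → (fun e => F e ∩ G e) ∈ opens
  sUnion_mem : ∀ S ⊆ opens, (fun e => ⋃ F ∈ S, F e) ∈ opens

/-- Soft connectedness of a collection of soft open sets over `X`:
no pair of nonnull soft open sets whose pointwise union is the absolute
soft set and whose pointwise intersection is the null soft set. -/
def SoftConnected {X E : Type*} (T : Set (E → Set X)) : Prop :=
  ¬ ∃ F G : E → Set X, F ∈ T ∧ G ∈ T ∧
    F ≠ (fun _ => (∅ : Set X)) ∧ G ≠ (fun _ => (∅ : Set X)) ∧
    (fun e => F e ∪ G e) = (fun _ => (Set.univ : Set X)) ∧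
    (fun e => F e ∩ G e) = (fun _ => (∅ : Set X))

/-- The soft relative opens on a subset `Y ⊆ X`. -/
def relOpens {X E : Type*} (T : Set (E → Set X)) (Y : Set X) : Set (E → Set X) :=
  {H | ∃ F ∈ T, H = fun e => Y ∩ F e}

/-- Soft connectedness of the soft subspace on `Y ⊆ X`. -/
def SoftConnectedOn {X E : Type*} (T : Set (E → Set X)) (Y : Set X) : Prop :=
  ¬ ∃ F G : E → Set X, F ∈ relOpens T Y ∧ G ∈ relOpens T Y ∧
    F ≠ (fun _ => (∅ : Set X)) ∧ G ≠ (fun _ => (∅ : Set X)) ∧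
    (fun e => F e ∪ G e) = (fun _ => Y) ∧
    (fun e => F e ∩ G e) = (fun _ => (∅ : Set X))

/-- Inverse image of a soft set under the soft mapping `f_{pu}`. -/
def softInv {U V A B : Type*} (u : U → V) (p : A → B) (G : B → Set V) : A → Set U :=
  fun a => u ⁻¹' (G (p a))

/-- Image of a soft set under the soft mapping `f_{pu}`. -/
def softImg {U V A B : Type*} (u : U → V) (p : A → B) (F : A → Set U) : B → Set V :=
  fun b => ⋃ a ∈ {a | p a = b}, u '' F a

/-- Cartesian product of soft sets. -/
def softProd {X Y E₁ E₂ : Type*} (F : E₁ → Set X) (G : E₂ → Set Y) :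
    E₁ × E₂ → Set (X × Y) :=
  fun e => F e.1 ×ˢ G e.2

/-- The soft product opens: arbitrary unions of products of soft open sets. -/
def prodOpens {X Y E₁ E₂ : Type*} (T₁ : Set (E₁ → Set X)) (T₂ : Set (E₂ → Set Y)) :
    Set (E₁ × E₂ → Set (X × Y)) :=
  {H | ∃ S : Set (E₁ × E₂ → Set (X × Y)),
    S ⊆ {K | ∃ F ∈ T₁, ∃ G ∈ T₂, K = softProd F G} ∧
    H = fun e => ⋃ K ∈ S, K e}

/-- Soft Hausdorff (soft T₂). -/
def SoftHausdorff {X E : Type*} (T : Set (E → Set X)) : Prop :=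
  ∀ x y : X, x ≠ y → ∃ F G : E → Set X, F ∈ T ∧ G ∈ T ∧
    (∀ e, x ∈ F e) ∧ (∀ e, y ∈ G e) ∧ ∀ e, F e ∩ G e = ∅

theorem soft_connected_subspace_in_separation {X E : Type*} (τ : SoftTopology X E)
    (F G : E → Set X) (hF : F ∈ τ.opens) (hG : G ∈ τ.opens)
    (hFne : F ≠ fun _ => (∅ : Set X)) (hGne : G ≠ fun _ => (∅ : Set X))
    (hunion : (fun e => F e ∪ G e) = fun _ => (Set.univ : Set X))
    (hinter : (fun e => F e ∩ G e) = fun _ => (∅ : Set X))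
    (Y : Set X) (hY : Y.Nonempty) (hconn : SoftConnectedOn τ.opens Y) :
    (∀ e, Y ⊆ F e) ∨ (∀ e, Y ⊆ G e) := by
  have hFG : ∀ e x, x ∈ Y → (x ∈ F e ∨ x ∈ G e) := by
    intro e x _
    have := congrFun hunion e
    have : x ∈ F e ∪ G e := by rw [this]; trivial
    exact this
  have hdis : ∀ e x, x ∈ F e → x ∈ G e → False := by
    intro e x hx hy
    have := congrFun hinter e
    have hx' : x ∈ F e ∩ G e := ⟨hx, hy⟩
    rw [this] at hx'; exact hx'
  by_cases hYF : (fun e => Y ∩ F e) = (fun _ => (∅ : Set X))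
  · right
    intro e x hx
    have h := congrFun hYF e
    rcases hFG e x hx with h1 | h1
    · exact absurd (h ▸ (⟨hx, h1⟩ : x ∈ Y ∩ F e)) (Set.notMem_empty x)
    · exact h1
  · by_cases hYG : (fun e => Y ∩ G e) = (fun _ => (∅ : Set X))
    · left
      intro e x hx
      have h := congrFun hYG e
      rcases hFG e x hx with h1 | h1
      · exact h1
      · exact absurd (h ▸ (⟨hx, h1⟩ : x ∈ Y ∩ G e)) (Set.notMem_empty x)
    · exfalso
      apply hconn
      refine ⟨fun e => Y ∩ F e, fun e => Y ∩ G e, ⟨F, hF, rfl⟩, ⟨G, hG, rfl⟩,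
        hYF, hYG, ?_, ?_⟩
      · funext e
        ext x
        simp only [Set.mem_union, Set.mem_inter_iff]
        constructor
        · rintro (⟨h,_⟩|⟨h,_⟩) <;> exact h
        · intro hx
          rcases hFG e x hx with h1 | h1
          · exact Or.inl ⟨hx, h1⟩
          · exact Or.inr ⟨hx, h1⟩
      · funext e
        ext x
        simp only [Set.mem_inter_iff, Set.mem_empty_iff_false, iff_false]
        rintro ⟨⟨_,h1⟩,⟨_,h2⟩⟩
        exact hdis e x h1 h2
end

section
/- The union of a collection of soft connected soft subspaces of a soft topological space (X, τ, E) whose soft intersection is nonnull is a soft connected soft subspace. -/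
theorem soft_connected_iUnion {X E : Type*} (τ : SoftTopology X E) {J : Type*}
    (Y : J → Set X) (hne : ∀ j, (Y j).Nonempty)
    (hconn : ∀ j, SoftConnectedOn τ.opens (Y j))
    (hint : (⋂ j, Y j).Nonempty) :
    SoftConnectedOn τ.opens (⋃ j, Y j) := by
  rintro ⟨F, G, ⟨F', hF', rfl⟩, ⟨G', hG', rfl⟩, hFne, hGne, hunion, hinter⟩
  obtain ⟨x, hx⟩ := hint
  simp only [Set.mem_iInter] at hx
  -- whole space is covered pointwise
  have hcov : ∀ e, ∀ z ∈ ⋃ j, Y j, z ∈ F' e ∪ G' e := by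
    intro e z hz
    rw [← congrFun hunion e] at hz
    rcases hz with h | h
    · exact Or.inl h.2
    · exact Or.inr h.2
  have hdisj : ∀ e, ((⋃ j, Y j) ∩ F' e) ∩ ((⋃ j, Y j) ∩ G' e) = ∅ := fun e =>
    congrFun hinter e
  -- each Y j lies entirely in F' side or G' side
  have key : ∀ j, (∀ e, Y j ∩ F' e = ∅) ∨ (∀ e, Y j ∩ G' e = ∅) := by
    intro j
    by_contra h
    push_neg at h
    obtain ⟨⟨e1, he1⟩, e2, he2⟩ := h
    apply hconn j
    refine ⟨fun e => Y j ∩ F' e, fun e => Y j ∩ G' e, ⟨F', hF', rfl⟩, ⟨G', hG', rfl⟩,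
      fun h => he1.ne_empty (congrFun h e1), fun h => he2.ne_empty (congrFun h e2), ?_, ?_⟩
    · funext e
      ext z
      simp only [Set.mem_union, Set.mem_inter_iff]
      constructor
      · rintro (⟨h1, _⟩ | ⟨h1, _⟩) <;> exact h1
      · intro hz
        rcases hcov e z (Set.mem_iUnion.2 ⟨j, hz⟩) with h | h
        · exact Or.inl ⟨hz, h⟩
        · exact Or.inr ⟨hz, h⟩
    · funext e
      apply Set.eq_empty_of_subset_empty
      intro z hz
      have : z ∈ ((⋃ j, Y j) ∩ F' e) ∩ ((⋃ j, Y j) ∩ G' e) :=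
        ⟨⟨Set.mem_iUnion.2 ⟨j, hz.1.1⟩, hz.1.2⟩, ⟨Set.mem_iUnion.2 ⟨j, hz.2.1⟩, hz.2.2⟩⟩
      rw [hdisj e] at this
      exact this
  -- x is in F' e for all e
  have hxF : ∀ e, x ∈ F' e := by
    obtain ⟨e0, he0⟩ := Function.ne_iff.1 hFne
    obtain ⟨y, hy⟩ := Set.nonempty_iff_ne_empty.2 he0
    obtain ⟨j0, hj0⟩ := Set.mem_iUnion.1 hy.1
    have hkey : ∀ e, Y j0 ∩ G' e = ∅ := by
      rcases key j0 with h | h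
      · exact (Set.eq_empty_iff_forall_notMem.1 (h e0) y ⟨hj0, hy.2⟩).elim
      · exact h
    intro e
    rcases hcov e x (Set.mem_iUnion.2 ⟨j0, hx j0⟩) with h | h
    · exact h
    · exact (Set.eq_empty_iff_forall_notMem.1 (hkey e) x ⟨hx j0, h⟩).elim
  have hxG : ∀ e, x ∈ G' e := by
    obtain ⟨e0, he0⟩ := Function.ne_iff.1 hGne
    obtain ⟨y, hy⟩ := Set.nonempty_iff_ne_empty.2 he0
    obtain ⟨j0, hj0⟩ := Set.mem_iUnion.1 hy.1
    have hkey : ∀ e, Y j0 ∩ F' e = ∅ := by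
      rcases key j0 with h | h
      · exact h
      · exact (Set.eq_empty_iff_forall_notMem.1 (h e0) y ⟨hj0, hy.2⟩).elim
    intro e
    rcases hcov e x (Set.mem_iUnion.2 ⟨j0, hx j0⟩) with h | h
    · exact (Set.eq_empty_iff_forall_notMem.1 (hkey e) x ⟨hx j0, h⟩).elim
    · exact h
  obtain ⟨e0, he0⟩ := Function.ne_iff.1 hFne
  obtain ⟨y, hy⟩ := Set.nonempty_iff_ne_empty.2 he0
  obtain ⟨j0, -⟩ := Set.mem_iUnion.1 hy.1
  have hmem : x ∈ ((⋃ j, Y j) ∩ F' e0) ∩ ((⋃ j, Y j) ∩ G' e0) :=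
    ⟨⟨Set.mem_iUnion.2 ⟨j0, hx j0⟩, hxF e0⟩, ⟨Set.mem_iUnion.2 ⟨j0, hx j0⟩, hxG e0⟩⟩
  rw [hdisj e0] at hmem
  exact hmem
end

section
/- If (F, E₁) is a soft closed set in a soft topological space (X, τ₁, E₁) and (G, E₂) is a soft closed set in (Y, τ₂, E₂), then (F, E₁) × (G, E₂) is soft closed in the soft product topological space (X × Y, τ, E₁ × E₂). -/
theorem softProd_closed {X Y E₁ E₂ : Type*}
    (τ₁ : SoftTopology X E₁) (τ₂ : SoftTopology Y E₂)
    (F : E₁ → Set X) (G : E₂ → Set Y)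
    (hF : (fun e => (F e)ᶜ) ∈ τ₁.opens) (hG : (fun e => (G e)ᶜ) ∈ τ₂.opens) :
    (fun e => (softProd F G e)ᶜ) ∈ prodOpens τ₁.opens τ₂.opens := by
  refine ⟨{softProd (fun e => (F e)ᶜ) (fun _ => Set.univ),
           softProd (fun _ => Set.univ) (fun e => (G e)ᶜ)}, ?_, ?_⟩
  · rintro K (rfl | rfl)
    · exact ⟨_, hF, _, τ₂.univ_mem, rfl⟩
    · exact ⟨_, τ₁.univ_mem, _, hG, rfl⟩
  · funext e
    ext ⟨x, y⟩
    simp [softProd, Set.mem_prod, not_and_or]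
    tauto
end

section
/- The soft product of two soft Hausdorff (soft T₂) spaces is soft Hausdorff. -/
lemma softProd_mem {X Y E₁ E₂ : Type*} {T₁ : Set (E₁ → Set X)} {T₂ : Set (E₂ → Set Y)}
    {F : E₁ → Set X} {G : E₂ → Set Y} (hF : F ∈ T₁) (hG : G ∈ T₂) :
    softProd F G ∈ prodOpens T₁ T₂ := by
  refine ⟨{softProd F G}, ?_, ?_⟩
  · rintro K rfl; exact ⟨F, hF, G, hG, rfl⟩
  · funext e; simp

theorem softProd_hausdorff {X Y E₁ E₂ : Type*}
    (τ₁ : SoftTopology X E₁) (τ₂ : SoftTopology Y E₂)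
    (h₁ : SoftHausdorff τ₁.opens) (h₂ : SoftHausdorff τ₂.opens) :
    SoftHausdorff (prodOpens τ₁.opens τ₂.opens) := by
  rintro ⟨x₁, y₁⟩ ⟨x₂, y₂⟩ hne
  rcases not_and_or.mp (fun h => hne (Prod.ext h.1 h.2)) with hx | hy
  · obtain ⟨F, G, hF, hG, hxF, hxG, hdisj⟩ := h₁ x₁ x₂ hx
    refine ⟨softProd F (fun _ => Set.univ), softProd G (fun _ => Set.univ),
      softProd_mem hF τ₂.univ_mem, softProd_mem hG τ₂.univ_mem,
      fun e => ⟨hxF e.1, trivial⟩, fun e => ⟨hxG e.1, trivial⟩, fun e => ?_⟩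
    simp only [softProd]
    rw [Set.prod_inter_prod, hdisj e.1, Set.empty_prod]
  · obtain ⟨F, G, hF, hG, hyF, hyG, hdisj⟩ := h₂ y₁ y₂ hy
    refine ⟨softProd (fun _ => Set.univ) F, softProd (fun _ => Set.univ) G,
      softProd_mem τ₁.univ_mem hF, softProd_mem τ₁.univ_mem hG,
      fun e => ⟨trivial, hyF e.2⟩, fun e => ⟨trivial, hyG e.2⟩, fun e => ?_⟩
    simp only [softProd]
    rw [Set.prod_inter_prod, hdisj e.2, Set.prod_empty]
end

section
/- The soft cartesian product of two soft connected soft topological spaces (U, τ₁, A) and (V, τ₂, B) is soft connected. -/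
lemma sec1_open {U V A B : Type*} (τ₁ : SoftTopology U A) (τ₂ : SoftTopology V B)
    {F : A × B → Set (U × V)} (hF : F ∈ prodOpens τ₁.opens τ₂.opens) (b : B) (y : V) :
    (fun a => {x | (x, y) ∈ F (a, b)}) ∈ τ₁.opens := by
  obtain ⟨S, hS, rfl⟩ := hF
  have key := τ₁.sUnion_mem
    {F' | F' ∈ τ₁.opens ∧ ∃ G' ∈ τ₂.opens, y ∈ G' b ∧ softProd F' G' ∈ S}
    (fun _ h => h.1)
  convert key using 1
  funext a; ext x
  simp only [Set.mem_setOf_eq, Set.mem_iUnion, exists_prop]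
  constructor
  · rintro ⟨K, hK, hxK⟩
    obtain ⟨F', hF', G', hG', rfl⟩ := hS hK
    exact ⟨F', ⟨hF', G', hG', hxK.2, hK⟩, hxK.1⟩
  · rintro ⟨F', ⟨hF', G', hG', hyG', hKS⟩, hx⟩
    exact ⟨softProd F' G', hKS, hx, hyG'⟩

lemma sec2_open {U V A B : Type*} (τ₁ : SoftTopology U A) (τ₂ : SoftTopology V B)
    {F : A × B → Set (U × V)} (hF : F ∈ prodOpens τ₁.opens τ₂.opens) (a : A) (x : U) :
    (fun b => {y | (x, y) ∈ F (a, b)}) ∈ τ₂.opens := by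
  obtain ⟨S, hS, rfl⟩ := hF
  have key := τ₂.sUnion_mem
    {G' | G' ∈ τ₂.opens ∧ ∃ F' ∈ τ₁.opens, x ∈ F' a ∧ softProd F' G' ∈ S}
    (fun _ h => h.1)
  convert key using 1
  funext b; ext y
  simp only [Set.mem_setOf_eq, Set.mem_iUnion, exists_prop]
  constructor
  · rintro ⟨K, hK, hxK⟩
    obtain ⟨F', hF', G', hG', rfl⟩ := hS hK
    exact ⟨G', ⟨hG', F', hF', hxK.1, hK⟩, hxK.2⟩
  · rintro ⟨G', ⟨hG', F', hF', hxF', hKS⟩, hy⟩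
    exact ⟨softProd F' G', hKS, hxF', hy⟩

theorem softProd_connected {U V A B : Type*}
    (τ₁ : SoftTopology U A) (τ₂ : SoftTopology V B)
    (h₁ : SoftConnected τ₁.opens) (h₂ : SoftConnected τ₂.opens) :
    SoftConnected (prodOpens τ₁.opens τ₂.opens) := by
  rintro ⟨F, G, hF, hG, hFne, hGne, hFG, hFGd⟩
  have hU : ∀ e (z : U × V), z ∈ F e ∪ G e := by
    intro e z
    have := congrFun hFG e
    rw [this]; trivial
  have hD : ∀ e (z : U × V), z ∈ F e → z ∈ G e → False := by
    intro e z h1 h2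
    have := congrFun hFGd e
    have : z ∈ F e ∩ G e := ⟨h1, h2⟩
    rw [congrFun hFGd e] at this
    exact this
  -- witnesses of nonnullity
  have exF : ∃ e z, z ∈ F e := by
    by_contra h
    push_neg at h
    exact hFne (funext fun e => Set.eq_empty_iff_forall_notMem.2 (h e))
  have exG : ∃ e z, z ∈ G e := by
    by_contra h
    push_neg at h
    exact hGne (funext fun e => Set.eq_empty_iff_forall_notMem.2 (h e))
  obtain ⟨⟨a₀, b₀⟩, ⟨x₀, y₀⟩, hmemF⟩ := exF
  obtain ⟨⟨a₁, b₁⟩, ⟨x₁, y₁⟩, hmemG⟩ := exG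
  -- claim1: for fixed (b, y), sections over A form a trivial pair
  have claim1 : ∀ (b : B) (y : V),
      (fun a => {x | (x, y) ∈ F (a, b)}) = (fun _ => (∅ : Set U)) ∨
      (fun a => {x | (x, y) ∈ G (a, b)}) = (fun _ => (∅ : Set U)) := by
    intro b y
    by_contra h
    push_neg at h
    exact h₁ ⟨_, _, sec1_open τ₁ τ₂ hF b y, sec1_open τ₁ τ₂ hG b y, h.1, h.2,
      funext fun a => by
        ext x
        simp only [Set.mem_union, Set.mem_setOf_eq, Set.mem_univ, iff_true]
        exact hU (a, b) (x, y),
      funext fun a => by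
        ext x
        simp only [Set.mem_inter_iff, Set.mem_setOf_eq, Set.mem_empty_iff_false, iff_false,
          not_and]
        exact fun h1 h2 => hD (a, b) (x, y) h1 h2⟩
  -- claim2: for fixed (a, x), sections over B form a trivial pair
  have claim2 : ∀ (a : A) (x : U),
      (fun b => {y | (x, y) ∈ F (a, b)}) = (fun _ => (∅ : Set V)) ∨
      (fun b => {y | (x, y) ∈ G (a, b)}) = (fun _ => (∅ : Set V)) := by
    intro a x
    by_contra h
    push_neg at h
    exact h₂ ⟨_, _, sec2_open τ₁ τ₂ hF a x, sec2_open τ₁ τ₂ hG a x, h.1, h.2,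
      funext fun b => by
        ext y
        simp only [Set.mem_union, Set.mem_setOf_eq, Set.mem_univ, iff_true]
        exact hU (a, b) (x, y),
      funext fun b => by
        ext y
        simp only [Set.mem_inter_iff, Set.mem_setOf_eq, Set.mem_empty_iff_false, iff_false,
          not_and]
        exact fun h1 h2 => hD (a, b) (x, y) h1 h2⟩
  -- (b₁, y₁) is G-type: ∀ a x, (x, y₁) ∈ G (a, b₁)
  have gtype : ∀ (a : A) (x : U), (x, y₁) ∈ G (a, b₁) := by
    intro a x
    rcases claim1 b₁ y₁ with h | h
    · rcases hU (a, b₁) (x, y₁) with hx | hx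
      · exfalso
        have := congrFun h a
        rw [Set.eq_empty_iff_forall_notMem] at this
        exact this x hx
      · exact hx
    · exfalso
      have := congrFun h a₁
      rw [Set.eq_empty_iff_forall_notMem] at this
      exact this x₁ hmemG
  -- apply claim2 at (a₀, x₀)
  rcases claim2 a₀ x₀ with h | h
  · have := congrFun h b₀
    rw [Set.eq_empty_iff_forall_notMem] at this
    exact this y₀ hmemF
  · -- then (x₀, y) ∈ F (a₀, b) for all b, y; take (b₁, y₁)
    have hxF : (x₀, y₁) ∈ F (a₀, b₁) := by
      rcases hU (a₀, b₁) (x₀, y₁) with hx | hx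
      · exact hx
      · exfalso
        have := congrFun h b₁
        rw [Set.eq_empty_iff_forall_notMem] at this
        exact this y₁ hx
    exact hD (a₀, b₁) (x₀, y₁) hxF (gtype a₀ x₀)
end
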